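/- arXiv:1707.09741 — 7 statements merged into one kernel-verified Lean document; each statement's English description precedes it below -/
import Mathlib

section
/- Define A_n, B_n, C_n by A_1 = 3, A_2 = 11, B_0 = 1, B_1 = 4, C_0 = 2, C_1 = 7, each satisfying x_n = 4x_{n-1} - x_{n-2}. Define L(n) = A_n² + C_{n-1}B_{n-1} + B_{n-2}B_{n-1} for n ≥ 2. Then L(n) = (1/6)[(3+√3)(7+4√3)^n + (3-√3)(7-4√3)^n]. -/
theorem stmt_5 (A B C : ℕ → ℝ)
    (hA1 : A 1 = 3) (hA2 : A 2 = 11) (hB0 : B 0 = 1) (hB1 : B 1 = 4)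
    (hC0 : C 0 = 2) (hC1 : C 1 = 7)
    (hArec : ∀ n ≥ 3, A n = 4 * A (n - 1) - A (n - 2))
    (hBrec : ∀ n ≥ 2, B n = 4 * B (n - 1) - B (n - 2))
    (hCrec : ∀ n ≥ 2, C n = 4 * C (n - 1) - C (n - 2)) :
    ∀ n ≥ 2, A n ^ 2 + C (n - 1) * B (n - 1) + B (n - 2) * B (n - 1) =
      (1 / 6) * ((3 + Real.sqrt 3) * (7 + 4 * Real.sqrt 3) ^ n +
        (3 - Real.sqrt 3) * (7 - 4 * Real.sqrt 3) ^ n) := by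
  set s : ℝ := Real.sqrt 3 with hsdef
  have hs : s ^ 2 = 3 := Real.sq_sqrt (by norm_num)
  -- closed form for B
  have hB2 : ∀ m : ℕ,
      B m = ((3 + 2*s)/6) * (2+s)^m + ((3 - 2*s)/6) * (2-s)^m ∧
      B (m+1) = ((3 + 2*s)/6) * (2+s)^(m+1) + ((3 - 2*s)/6) * (2-s)^(m+1) := by
    intro m
    induction m with
    | zero =>
      constructor
      · rw [hB0]; ring
      · rw [hB1]; linear_combination (-(2:ℝ)/3) * hs
    | succ k ih =>
      refine ⟨ih.2, ?_⟩
      have h := hBrec (k+2) (by omega)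
      rw [show k+2-1 = k+1 by omega, show k+2-2 = k by omega] at h
      rw [h, ih.1, ih.2]
      linear_combination (-(((3+2*s)/6)*(2+s)^k + ((3-2*s)/6)*(2-s)^k)) * hs
  have hB : ∀ m : ℕ, B m = ((3 + 2*s)/6) * (2+s)^m + ((3 - 2*s)/6) * (2-s)^m :=
    fun m => (hB2 m).1
  -- closed form for C
  have hC2 : ∀ m : ℕ,
      C m = ((2 + s)/2) * (2+s)^m + ((2 - s)/2) * (2-s)^m ∧
      C (m+1) = ((2 + s)/2) * (2+s)^(m+1) + ((2 - s)/2) * (2-s)^(m+1) := by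
    intro m
    induction m with
    | zero =>
      constructor
      · rw [hC0]; ring
      · rw [hC1]; linear_combination -(1:ℝ) * hs
    | succ k ih =>
      refine ⟨ih.2, ?_⟩
      have h := hCrec (k+2) (by omega)
      rw [show k+2-1 = k+1 by omega, show k+2-2 = k by omega] at h
      rw [h, ih.1, ih.2]
      linear_combination (-(((2+s)/2)*(2+s)^k + ((2-s)/2)*(2-s)^k)) * hs
  have hC : ∀ m : ℕ, C m = ((2 + s)/2) * (2+s)^m + ((2 - s)/2) * (2-s)^m :=
    fun m => (hC2 m).1
  -- closed form for A (from index 1)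
  have hA2' : ∀ m : ℕ,
      A (m+1) = ((3 + s)/6) * (2+s)^(m+1) + ((3 - s)/6) * (2-s)^(m+1) ∧
      A (m+2) = ((3 + s)/6) * (2+s)^(m+2) + ((3 - s)/6) * (2-s)^(m+2) := by
    intro m
    induction m with
    | zero =>
      constructor
      · rw [hA1]; linear_combination (-(1:ℝ)/3) * hs
      · rw [hA2]; linear_combination (-(7:ℝ)/3) * hs
    | succ k ih =>
      refine ⟨ih.2, ?_⟩
      have h := hArec (k+3) (by omega)
      rw [show k+3-1 = k+2 by omega, show k+3-2 = k+1 by omega] at h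
      rw [h, ih.1, ih.2]
      linear_combination (-(((3+s)/6)*(2+s)^(k+1) + ((3-s)/6)*(2-s)^(k+1))) * hs
  have hA : ∀ m : ℕ, A (m+1) = ((3 + s)/6) * (2+s)^(m+1) + ((3 - s)/6) * (2-s)^(m+1) :=
    fun m => (hA2' m).1
  intro n hn
  obtain ⟨m, rfl⟩ : ∃ m, n = m + 2 := ⟨n - 2, by omega⟩
  rw [show m+2-1 = m+1 by omega, show m+2-2 = m by omega]
  have h1 : (7 + 4*s : ℝ) = (2+s)^2 := by linear_combination -hs
  have h2 : (7 - 4*s : ℝ) = (2-s)^2 := by linear_combination -hs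
  rw [show A (m+2) = A ((m+1)+1) from rfl, hA (m+1), hB m, hB (m+1), hC (m+1), h1, h2,
    ← pow_mul, ← pow_mul, mul_comm 2 (m+2), pow_mul, pow_mul]
  set a : ℝ := (2+s)^m
  set b : ℝ := (2-s)^m
  linear_combination (((1:ℝ)/2)*b^2 - (13/3)*a*b + (1/2)*a^2 - (11/12)*s*b^2 + (11/12)*s*a^2
      + (2/3)*s^2*b^2 + (10/9)*s^2*a*b + (2/3)*s^2*a^2 - (2/9)*s^3*b^2 + (2/9)*s^3*a^2
      + (1/36)*s^4*b^2 - (1/18)*s^4*a*b + (1/36)*s^4*a^2) * hs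
end

section
/- Define A_n, B_n, C_n by A_1 = 3, A_2 = 11, B_0 = 1, B_1 = 4, C_0 = 2, C_1 = 7, each satisfying x_n = 4x_{n-1} - x_{n-2}. Then for n ≥ 2, A_n² + C_{n-1}B_{n-1} + B_{n-2}B_{n-1} = A_{2n}, where A is extended by its recurrence. -/
theorem stmt_6 (A B C : ℕ → ℤ)
    (hA1 : A 1 = 3) (hA2 : A 2 = 11) (hB0 : B 0 = 1) (hB1 : B 1 = 4)
    (hC0 : C 0 = 2) (hC1 : C 1 = 7)
    (hArec : ∀ n ≥ 3, A n = 4 * A (n - 1) - A (n - 2))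
    (hBrec : ∀ n ≥ 2, B n = 4 * B (n - 1) - B (n - 2))
    (hCrec : ∀ n ≥ 2, C n = 4 * C (n - 1) - C (n - 2)) :
    ∀ n ≥ 2, A n ^ 2 + C (n - 1) * B (n - 1) + B (n - 2) * B (n - 1) = A (2 * n) := by
  have hB' : ∀ n, B (n + 2) = 4 * B (n + 1) - B n := by
    intro n
    have := hBrec (n + 2) (by omega)
    simpa using this
  have hA' : ∀ n, A (n + 3) = 4 * A (n + 2) - A (n + 1) := by
    intro n
    have := hArec (n + 3) (by omega)
    simpa using this
  have hC' : ∀ n, C (n + 2) = 4 * C (n + 1) - C n := by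
    intro n
    have := hCrec (n + 2) (by omega)
    simpa using this
  -- A n = B n - B (n-1)
  have hAB : ∀ n, A (n + 1) = B (n + 1) - B n ∧ A (n + 2) = B (n + 2) - B (n + 1) := by
    intro n
    induction n with
    | zero =>
      constructor
      · rw [hA1, hB1, hB0]; norm_num
      · have h2 : B 2 = 4 * B 1 - B 0 := hB' 0
        rw [hA2, h2, hB1, hB0]; norm_num
    | succ k ih =>
      refine ⟨ih.2, ?_⟩
      rw [hA' k, hB' (k + 1), ih.1, ih.2]
      linear_combination hB' k
  -- C n = 2 * B n - B (n-1)
  have hCB : ∀ n, C (n + 1) = 2 * B (n + 1) - B n ∧ C (n + 2) = 2 * B (n + 2) - B (n + 1) := by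
    intro n
    induction n with
    | zero =>
      constructor
      · rw [hC1, hB1, hB0]; norm_num
      · have h2 : B 2 = 4 * B 1 - B 0 := hB' 0
        rw [hC' 0, hC1, hC0, h2, hB1, hB0]; norm_num
    | succ k ih =>
      refine ⟨ih.2, ?_⟩
      rw [hC' (k + 1), hB' (k + 1), ih.1, ih.2]
      linear_combination hB' k
  -- doubling identities
  have hI : ∀ n, B (2 * n + 2) = B (n + 1) ^ 2 - B n ^ 2 ∧
      B (2 * n + 3) = B (n + 1) * (B (n + 2) - B n) := by
    intro n
    induction n with
    | zero =>
      have h2 : B 2 = 4 * B 1 - B 0 := hB' 0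
      have h3 : B 3 = 4 * B 2 - B 1 := hB' 1
      constructor
      · rw [show 2 * 0 + 2 = 2 from rfl, h2, hB1, hB0]; ring
      · rw [show 2 * 0 + 3 = 3 from rfl, h3, h2, hB1, hB0]; ring
    | succ k ih =>
      obtain ⟨h1, h2⟩ := ih
      have e4 : B (2 * k + 4) = 4 * B (2 * k + 3) - B (2 * k + 2) := hB' (2 * k + 2)
      have e5 : B (2 * k + 5) = 4 * B (2 * k + 4) - B (2 * k + 3) := hB' (2 * k + 3)
      have hb : B (k + 2) = 4 * B (k + 1) - B k := hB' k
      have hb2 : B (k + 3) = 4 * B (k + 2) - B (k + 1) := hB' (k + 1)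
      have g1 : B (2 * k + 4) = B (k + 2) ^ 2 - B (k + 1) ^ 2 := by
        rw [e4, h2, h1, hb]; ring
      have g2 : B (2 * k + 5) = B (k + 2) * (B (k + 3) - B (k + 1)) := by
        rw [e5, g1, h2, hb2, hb]; ring
      refine ⟨?_, ?_⟩
      · rw [show 2 * (k + 1) + 2 = 2 * k + 4 by ring]; exact g1
      · rw [show 2 * (k + 1) + 3 = 2 * k + 5 by ring]; exact g2
  intro n hn
  obtain ⟨m, rfl⟩ : ∃ m, n = m + 2 := ⟨n - 2, by omega⟩
  have i1 : m + 2 - 1 = m + 1 := rfl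
  have i2 : m + 2 - 2 = m := rfl
  rw [i1, i2, show 2 * (m + 2) = 2 * m + 4 by ring]
  have hA2n : A (2 * m + 4) = B (2 * m + 4) - B (2 * m + 3) := by
    have := (hAB (2 * m + 3)).1
    rwa [show 2 * m + 3 + 1 = 2 * m + 4 by ring] at this
  have h1 : B (2 * m + 4) = B (m + 2) ^ 2 - B (m + 1) ^ 2 := by
    have := (hI (m + 1)).1
    rwa [show 2 * (m + 1) + 2 = 2 * m + 4 by ring] at this
  have h2 : B (2 * m + 3) = B (m + 1) * (B (m + 2) - B m) := (hI m).2
  have hb : B (m + 2) = 4 * B (m + 1) - B m := hB' m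
  rw [(hAB (m + 1)).1, (hCB m).1, hA2n, h1, h2]
  linear_combination (-B (m + 1)) * hb
end

section
/- Define L(n) = A_n² + C_{n-1}B_{n-1} + B_{n-2}B_{n-1} for n ≥ 2, where A_n, B_n, C_n satisfy x_n = 4x_{n-1} - x_{n-2} with A_1 = 3, A_2 = 11, B_0 = 1, B_1 = 4, C_0 = 2, C_1 = 7. Then L satisfies L(n) = 14L(n-1) - L(n-2) for n ≥ 4. -/
theorem stmt_7 (A B C L : ℕ → ℤ)
    (hA1 : A 1 = 3) (hA2 : A 2 = 11) (hB0 : B 0 = 1) (hB1 : B 1 = 4)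
    (hC0 : C 0 = 2) (hC1 : C 1 = 7)
    (hArec : ∀ n ≥ 3, A n = 4 * A (n - 1) - A (n - 2))
    (hBrec : ∀ n ≥ 2, B n = 4 * B (n - 1) - B (n - 2))
    (hCrec : ∀ n ≥ 2, C n = 4 * C (n - 1) - C (n - 2))
    (hL : ∀ n ≥ 2, L n = A n ^ 2 + C (n - 1) * B (n - 1) + B (n - 2) * B (n - 1)) :
    ∀ n ≥ 4, L n = 14 * L (n - 1) - L (n - 2) := by
  have key : ∀ n, 1 ≤ n → A n = B n - B (n-1) ∧ C n = 2 * B n - B (n-1) := by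
    intro n
    induction n using Nat.strong_induction_on with
    | _ n ih =>
      intro hn
      match n, hn with
      | 1, _ =>
        constructor
        · rw [hA1]; simp [hB1, hB0]
        · rw [hC1]; simp [hB1, hB0]
      | 2, _ =>
        have hB2 := hBrec 2 (by norm_num)
        have hC2 := hCrec 2 (by norm_num)
        simp only [show (2:ℕ)-1 = 1 from rfl, show (2:ℕ)-2 = 0 from rfl] at hB2 hC2
        constructor
        · rw [hA2, hB2, hB1, hB0]; norm_num
        · rw [hC2, hB2, hB1, hB0, hC1, hC0]; norm_num
      | (k+3), _ =>
        have h1 := ih (k+2) (by omega) (by omega)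
        have h2 := ih (k+1) (by omega) (by omega)
        have hAr := hArec (k+3) (by omega)
        have hBr := hBrec (k+3) (by omega)
        have hCr := hCrec (k+3) (by omega)
        simp only [show k+3-1 = k+2 from rfl, show k+3-2 = k+1 from rfl,
          show k+2-1 = k+1 from rfl, show k+1-1 = k from rfl] at *
        have hBr2 := hBrec (k+2) (by omega)
        simp only [show k+2-1 = k+1 from rfl, show k+2-2 = k from rfl] at hBr2
        constructor
        · rw [hAr, h1.1, h2.1, hBr]; linear_combination hBr2
        · rw [hCr, h1.2, h2.2, hBr]; linear_combination hBr2
  -- L n = B n ^2 - 2 B n B(n-1) + 3 B(n-1)^2 for n ≥ 2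
  have hLQ : ∀ n, 2 ≤ n → L n = B n ^ 2 - 2 * B n * B (n-1) + 3 * B (n-1) ^ 2 := by
    intro n hn
    obtain ⟨m, rfl⟩ : ∃ m, n = m + 2 := ⟨n - 2, by omega⟩
    have hA := (key (m+2) (by omega)).1
    have hC := (key (m+1) (by omega)).2
    have hLn := hL (m+2) (by omega)
    simp only [show m+2-1 = m+1 from rfl, show m+2-2 = m from rfl,
      show m+1-1 = m from rfl] at *
    rw [hLn, hA, hC]; ring
  intro n hn
  obtain ⟨m, rfl⟩ : ∃ m, n = m + 4 := ⟨n - 4, by omega⟩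
  have e1 := hLQ (m+4) (by omega)
  have e2 := hLQ (m+3) (by omega)
  have e3 := hLQ (m+2) (by omega)
  have r1 := hBrec (m+4) (by omega)
  have r2 := hBrec (m+3) (by omega)
  simp only [show m+4-1 = m+3 from rfl, show m+4-2 = m+2 from rfl,
    show m+3-1 = m+2 from rfl, show m+3-2 = m+1 from rfl,
    show m+2-1 = m+1 from rfl] at *
  rw [e1, e2, e3, r1, r2]; ring
end

section
/- Let T_n and M_n satisfy T_1 = 2, T_2 = 9, M_1 = 1, M_2 = 3, T_n = 2T_{n-1} + T_{n-2} + 4M_{n-1} and M_n = T_{n-1} + M_{n-1} for n ≥ 3. Then T_n = 3T_{n-1} + 3T_{n-2} - T_{n-3} for all n ≥ 4. -/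
theorem stmt_9 (T M : ℕ → ℤ)
    (hT1 : T 1 = 2) (hT2 : T 2 = 9) (hM1 : M 1 = 1) (hM2 : M 2 = 3)
    (hTrec : ∀ n ≥ 3, T n = 2 * T (n - 1) + T (n - 2) + 4 * M (n - 1))
    (hMrec : ∀ n ≥ 3, M n = T (n - 1) + M (n - 1)) :
    ∀ n ≥ 4, T n = 3 * T (n - 1) + 3 * T (n - 2) - T (n - 3) := by
  intro n hn
  obtain ⟨m, rfl⟩ : ∃ m, n = m + 4 := ⟨n - 4, by omega⟩
  have h1 := hTrec (m + 4) (by omega)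
  have h2 := hTrec (m + 3) (by omega)
  have h3 := hMrec (m + 3) (by omega)
  rw [show m + 4 - 1 = m + 3 from by omega, show m + 4 - 2 = m + 2 from by omega,
    show m + 4 - 3 = m + 1 from by omega, show m + 3 - 1 = m + 2 from by omega,
    show m + 3 - 2 = m + 1 from by omega] at *
  linarith
end

section
/- Let T_n satisfy T_1 = 2, T_2 = 9, T_3 = 32, T_n = 3T_{n-1} + 3T_{n-2} - T_{n-3} for n ≥ 4, and let A_n satisfy A_1 = 3, A_2 = 11, A_n = 4A_{n-1} - A_{n-2} for n ≥ 3. Then T_{2n} = A_n² for all n ≥ 1. -/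
theorem stmt_10 (T A : ℕ → ℤ)
    (hT1 : T 1 = 2) (hT2 : T 2 = 9) (hT3 : T 3 = 32)
    (hTrec : ∀ n ≥ 4, T n = 3 * T (n - 1) + 3 * T (n - 2) - T (n - 3))
    (hA1 : A 1 = 3) (hA2 : A 2 = 11)
    (hArec : ∀ n ≥ 3, A n = 4 * A (n - 1) - A (n - 2)) :
    ∀ n ≥ 1, T (2 * n) = A n ^ 2 := by
  have key : ∀ n, 1 ≤ n → T (2 * n) = A n ^ 2 ∧ T (2 * n + 1) = A n * A (n + 1) - 1 ∧
      T (2 * n + 2) = A (n + 1) ^ 2 ∧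
      A (n + 1) ^ 2 - 4 * A (n + 1) * A n + A n ^ 2 = -2 := by
    intro n hn
    induction n, hn using Nat.le_induction with
    | base =>
        have h4 := hTrec 4 (by norm_num)
        norm_num at h4
        rw [hT1, hT2, hT3] at h4
        norm_num [hT2, hT3, hA1, hA2, h4]
    | succ n hn ih =>
        obtain ⟨h0, h1, h2, h3⟩ := ih
        have e3 := hArec (n + 2) (by omega)
        simp only [show n + 2 - 1 = n + 1 from by omega,
          show n + 2 - 2 = n from by omega] at e3
        have r3 := hTrec (2 * n + 3) (by omega)
        simp only [show 2 * n + 3 - 1 = 2 * n + 2 from by omega,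
          show 2 * n + 3 - 2 = 2 * n + 1 from by omega,
          show 2 * n + 3 - 3 = 2 * n from by omega] at r3
        have r4 := hTrec (2 * n + 4) (by omega)
        simp only [show 2 * n + 4 - 1 = 2 * n + 3 from by omega,
          show 2 * n + 4 - 2 = 2 * n + 2 from by omega,
          show 2 * n + 4 - 3 = 2 * n + 1 from by omega] at r4
        rw [show 2 * (n + 1) = 2 * n + 2 from by ring,
          show 2 * n + 2 + 1 = 2 * n + 3 from by ring,
          show 2 * n + 2 + 2 = 2 * n + 4 from by ring]
        rw [h0, h1, h2] at r3
        rw [r3, h1, h2] at r4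
        refine ⟨h2, ?_, ?_, ?_⟩
        · rw [r3, e3]; linear_combination -h3
        · rw [r4, e3]; linear_combination -4*h3
        · rw [e3]; linear_combination h3
  intro n hn
  exact (key n hn).1
end

section
/- Let T_n satisfy T_1 = 2, T_2 = 9, T_3 = 32, T_n = 3T_{n-1} + 3T_{n-2} - T_{n-3} for n ≥ 4, and let B_n satisfy B_0 = 1, B_1 = 4, B_n = 4B_{n-1} - B_{n-2} for n ≥ 2. Then T_{2n+1} = 2B_n² for all n ≥ 0 (with n ≥ 1 if T_1 is the base case). -/
theorem stmt_11 (T B : ℕ → ℤ)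
    (hT1 : T 1 = 2) (hT2 : T 2 = 9) (hT3 : T 3 = 32)
    (hTrec : ∀ n ≥ 4, T n = 3 * T (n - 1) + 3 * T (n - 2) - T (n - 3))
    (hB0 : B 0 = 1) (hB1 : B 1 = 4)
    (hBrec : ∀ n ≥ 2, B n = 4 * B (n - 1) - B (n - 2)) :
    ∀ n, T (2 * n + 1) = 2 * B n ^ 2 := by
  have key : ∀ n, T (2 * n + 1) = 2 * B n ^ 2 ∧
      T (2 * n + 2) = (B (n + 1) - B n) ^ 2 ∧
      T (2 * n + 3) = 2 * B (n + 1) ^ 2 := by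
    intro n
    induction n with
    | zero =>
      refine ⟨?_, ?_, ?_⟩ <;> norm_num [hT1, hT2, hT3, hB0, hB1]
    | succ k ih =>
      obtain ⟨h1, h2, h3⟩ := ih
      have hB2 : B (k + 2) = 4 * B (k + 1) - B k := by
        have := hBrec (k + 2) (by omega)
        simpa using this
      have hT4 := hTrec (2 * k + 4) (by omega)
      have hT5 := hTrec (2 * k + 5) (by omega)
      simp only [show 2 * k + 4 - 1 = 2 * k + 3 from rfl,
        show 2 * k + 4 - 2 = 2 * k + 2 from rfl,
        show 2 * k + 4 - 3 = 2 * k + 1 from rfl] at hT4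
      simp only [show 2 * k + 5 - 1 = 2 * k + 4 from rfl,
        show 2 * k + 5 - 2 = 2 * k + 3 from rfl,
        show 2 * k + 5 - 3 = 2 * k + 2 from rfl] at hT5
      have e1 : 2 * (k + 1) + 1 = 2 * k + 3 := by ring
      have e2 : 2 * (k + 1) + 2 = 2 * k + 4 := by ring
      have e3 : 2 * (k + 1) + 3 = 2 * k + 5 := by ring
      refine ⟨?_, ?_, ?_⟩
      · rw [e1, h3]
      · rw [e2, hT4, h3, h2, h1, hB2]; ring
      · rw [e3, hT5, hT4, h3, h2, h1, hB2]; ring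
  intro n
  exact (key n).1
end

section
/- Let T_n satisfy T_1 = 2, T_2 = 9, T_3 = 32, T_n = 3T_{n-1} + 3T_{n-2} - T_{n-3} for n ≥ 4. Then T_{2n} is a perfect square and T_{2n+1} is twice a perfect square for all n ≥ 1. -/
private def auxA : ℕ → ℤ × ℤ
  | 0 => (1, 1)
  | n+1 => ((auxA n).1 + 2 * (auxA n).2, (auxA n).1 + 3 * (auxA n).2)

private lemma key (T : ℕ → ℤ)
    (hT1 : T 1 = 2) (hT2 : T 2 = 9) (hT3 : T 3 = 32)
    (hTrec : ∀ n ≥ 4, T n = 3 * T (n - 1) + 3 * T (n - 2) - T (n - 3)) :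
    ∀ n, (T (2*n+1) = 2 * (auxA n).2 ^ 2 ∧ T (2*n+2) = (auxA (n+1)).1 ^ 2) ∧
         (T (2*n+3) = 2 * (auxA (n+1)).2 ^ 2 ∧ T (2*n+4) = (auxA (n+2)).1 ^ 2) := by
  intro n
  induction n with
  | zero =>
      have h4 := hTrec 4 (by norm_num)
      norm_num [auxA] at h4 ⊢
      rw [hT1, hT2, hT3] at *
      norm_num [h4]
  | succ m ih =>
      obtain ⟨⟨h1, h2⟩, h3, h4⟩ := ih
      have h5 := hTrec (2*m+5) (by omega)
      have h6 := hTrec (2*m+6) (by omega)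
      have e5 : 2*m+5-1 = 2*m+4 := by omega
      have e5b : 2*m+5-2 = 2*m+3 := by omega
      have e5c : 2*m+5-3 = 2*m+2 := by omega
      have e6 : 2*m+6-1 = 2*m+5 := by omega
      have e6b : 2*m+6-2 = 2*m+4 := by omega
      have e6c : 2*m+6-3 = 2*m+3 := by omega
      rw [e5, e5b, e5c] at h5
      rw [e6, e6b, e6c] at h6
      have a1 : 2*(m+1)+1 = 2*m+3 := by ring
      have a2 : 2*(m+1)+2 = 2*m+4 := by ring
      have a3 : 2*(m+1)+3 = 2*m+5 := by ring
      have a4 : 2*(m+1)+4 = 2*m+6 := by ring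
      rw [a1, a2, a3, a4]
      refine ⟨⟨h3, h4⟩, ?_, ?_⟩
      · rw [h5, h4, h3, h2]
        simp only [auxA]
        ring
      · rw [h6, h5, h4, h3, h2]
        simp only [auxA]
        ring

theorem stmt_19 (T : ℕ → ℤ)
    (hT1 : T 1 = 2) (hT2 : T 2 = 9) (hT3 : T 3 = 32)
    (hTrec : ∀ n ≥ 4, T n = 3 * T (n - 1) + 3 * T (n - 2) - T (n - 3)) :
    ∀ n ≥ 1, (∃ k : ℤ, T (2 * n) = k ^ 2) ∧ (∃ k : ℤ, T (2 * n + 1) = 2 * k ^ 2) := by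
  intro n hn
  obtain ⟨m, rfl⟩ : ∃ m, n = m + 1 := ⟨n - 1, by omega⟩
  obtain ⟨⟨h1, h2⟩, h3, _⟩ := key T hT1 hT2 hT3 hTrec m
  constructor
  · exact ⟨(auxA (m+1)).1, by rw [show 2*(m+1) = 2*m+2 by ring, h2]⟩
  · exact ⟨(auxA (m+1)).2, by rw [show 2*(m+1)+1 = 2*m+3 by ring, h3]⟩
end
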